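/- Let 1 < p < 2 with conjugate exponent q (1/p + 1/q = 1), γ > 0, let X be a real n×d matrix and y ∈ ℝⁿ. Define F(w) = (γ/2)‖Xw − y‖₂² + (1/p)‖w‖_p^p for w ∈ ℝᵈ and Λ(α) = (1/q)‖Xᵀα‖_q^q + (1/(2γ))‖α‖₂² − ⟨y, α⟩ for α ∈ ℝⁿ. Then strong duality holds: the infimum of F over ℝᵈ equals minus the infimum of Λ over ℝⁿ, and both infima are attained. -/

import Mathlib

open scoped BigOperators

/-!
For every `w` and `α` the duality gap `F w + Λ α` splits into a sum of Young gaps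
`|w_j|^p/p + |u_j|^q/q - w_j u_j` with `u = Xᵀα`, and of squares `(γ (Xw - y)_i + α_i)² / (2γ)`;
hence `F w + Λ α ≥ 0`. The dual objective `Λ` is continuous and coercive, so it has a minimiser
`ᾱ`. Differentiating `Λ` at `ᾱ` shows that `w̄ = ∇(‖·‖_q^q / q)(Xᵀᾱ)` satisfies
`γ (Xw̄ - y) + ᾱ = 0`, and `w̄` is exactly the equality case of Young's inequality against `Xᵀᾱ`.
So both parts of the gap vanish at `(w̄, ᾱ)`, which makes `w̄` a primal minimiser with
`F w̄ = -Λ ᾱ`.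
-/

open Filter Matrix

/-- `dualityMap q x = sign x * |x| ^ (q - 1)` is the derivative of `|x| ^ q / q`. -/
noncomputable def dualityMap (q x : ℝ) : ℝ := |x| ^ (q - 2) * x

lemma dualityMap_mul_self {q : ℝ} (hq : q ≠ 0) (x : ℝ) : dualityMap q x * x = |x| ^ q := by
  have h := Real.rpow_add_natCast' (abs_nonneg x) (y := q - 2) (n := 2) (by simpa using hq)
  rw [dualityMap, mul_assoc, ← abs_mul_abs_self, ← sq, ← h]
  norm_num

lemma abs_dualityMap {q : ℝ} (hq : q ≠ 1) (x : ℝ) : |dualityMap q x| = |x| ^ (q - 1) := by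
  have h := Real.rpow_add_one' (abs_nonneg x) (y := q - 2) (by contrapose! hq; linarith)
  rw [dualityMap, abs_mul, abs_of_nonneg (Real.rpow_nonneg (abs_nonneg x) _), ← h]
  ring_nf

lemma dualityMap_mul_self_eq_young {p q : ℝ} (hpq : p.HolderConjugate q) (x : ℝ) :
    dualityMap q x * x = |dualityMap q x| ^ p / p + |x| ^ q / q := by
  rw [abs_dualityMap hpq.symm.lt.ne', ← Real.rpow_mul (abs_nonneg x), hpq.symm.sub_one_mul_conj,
    dualityMap_mul_self hpq.symm.ne_zero, div_eq_mul_inv, div_eq_mul_inv, ← mul_add,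
    hpq.inv_add_inv_eq_one, mul_one]

lemma HasDerivAt.comp_add_mul {f : ℝ → ℝ} {f' u : ℝ} (hf : HasDerivAt f f' u) (b : ℝ) :
    HasDerivAt (fun t => f (u + t * b)) (f' * b) 0 := by
  have hline : HasDerivAt (fun t : ℝ => u + t * b) b 0 := by
    simpa using ((hasDerivAt_id (0 : ℝ)).mul_const b).const_add u
  exact hf.comp_of_eq 0 hline (by simp)

lemma sq_norm_le_sum_sq {ι : Type*} [Fintype ι] (x : ι → ℝ) : ‖x‖ ^ 2 ≤ ∑ i, x i ^ 2 := by
  refine (Real.le_sqrt (norm_nonneg x) (Finset.sum_nonneg fun i _ => sq_nonneg (x i))).1 ?_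
  refine (pi_norm_le_iff_of_nonneg (Real.sqrt_nonneg _)).2 fun i => Real.abs_le_sqrt ?_
  exact Finset.single_le_sum (fun j _ => sq_nonneg (x j)) (Finset.mem_univ i)

section LeastSquares

variable {m n : Type*} [Fintype m] [Fintype n] {p q γ : ℝ} (X : Matrix m n ℝ) (y : m → ℝ)

noncomputable def ellpPrimal (p γ : ℝ) (w : n → ℝ) : ℝ :=
  γ / 2 * ∑ i, ((X *ᵥ w) i - y i) ^ 2 + 1 / p * ∑ j, |w j| ^ p

noncomputable def ellpDual (q γ : ℝ) (α : m → ℝ) : ℝ :=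
  1 / q * ∑ j, |(Xᵀ *ᵥ α) j| ^ q + 1 / (2 * γ) * ∑ i, α i ^ 2 - ∑ i, y i * α i

lemma ellpPrimal_add_ellpDual (hγ : γ ≠ 0) (w : n → ℝ) (α : m → ℝ) :
    ellpPrimal X y p γ w + ellpDual X y q γ α =
      ∑ j, (|w j| ^ p / p + |(Xᵀ *ᵥ α) j| ^ q / q - w j * (Xᵀ *ᵥ α) j)
        + ∑ i, (γ * ((X *ᵥ w) i - y i) + α i) ^ 2 / (2 * γ) := by
  have hpair : ∑ j, w j * (Xᵀ *ᵥ α) j = ∑ i, (X *ᵥ w) i * α i :=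
    (dotProduct_transpose_mulVec X w α).trans (dotProduct_comm _ _)
  have hquad : ∑ i, (γ * ((X *ᵥ w) i - y i) + α i) ^ 2 / (2 * γ) =
      γ / 2 * ∑ i, ((X *ᵥ w) i - y i) ^ 2 + 1 / (2 * γ) * ∑ i, α i ^ 2
        + ∑ i, (X *ᵥ w) i * α i - ∑ i, y i * α i := by
    simp only [Finset.mul_sum, ← Finset.sum_add_distrib, ← Finset.sum_sub_distrib]
    refine Finset.sum_congr rfl fun i _ => ?_
    field_simp
    ring
  rw [hquad, Finset.sum_sub_distrib, Finset.sum_add_distrib, hpair, ellpPrimal, ellpDual,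
    ← Finset.sum_div, ← Finset.sum_div]
  ring

lemma ellpPrimal_add_ellpDual_nonneg (hpq : p.HolderConjugate q) (hγ : 0 < γ) (w : n → ℝ)
    (α : m → ℝ) : 0 ≤ ellpPrimal X y p γ w + ellpDual X y q γ α := by
  rw [ellpPrimal_add_ellpDual X y hγ.ne']
  refine add_nonneg (Finset.sum_nonneg fun j _ => ?_) (Finset.sum_nonneg fun i _ => by positivity)
  linarith [Real.young_inequality (w j) ((Xᵀ *ᵥ α) j) hpq]

lemma ellpPrimal_add_ellpDual_eq_zero (hpq : p.HolderConjugate q) (hγ : γ ≠ 0) {α : m → ℝ}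
    (hα : X *ᵥ (dualityMap q ∘ (Xᵀ *ᵥ α)) - y + γ⁻¹ • α = 0) :
    ellpPrimal X y p γ (dualityMap q ∘ (Xᵀ *ᵥ α)) + ellpDual X y q γ α = 0 := by
  rw [ellpPrimal_add_ellpDual X y hγ, Finset.sum_eq_zero, Finset.sum_eq_zero, add_zero]
  · intro i _
    have hi : (X *ᵥ (dualityMap q ∘ (Xᵀ *ᵥ α))) i - y i + γ⁻¹ * α i = 0 := congr_fun hα i
    rw [← mul_inv_cancel_left₀ hγ (α i), ← mul_add, hi]
    simp
  · intro j _
    rw [Function.comp_apply, dualityMap_mul_self_eq_young hpq]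
    ring

lemma continuous_ellpDual (hq : 0 ≤ q) : Continuous (ellpDual X y q γ) := by
  unfold ellpDual
  fun_prop (disch := exact Or.inr hq)

lemma tendsto_ellpDual_cocompact (hq : 0 ≤ q) (hγ : 0 < γ) :
    Tendsto (ellpDual X y q γ) (cocompact (m → ℝ)) atTop := by
  have hlower : ∀ α, ‖α‖ ^ 2 / (4 * γ) - γ * ∑ i, y i ^ 2 ≤ ellpDual X y q γ α := by
    intro α
    have hreg : 0 ≤ 1 / q * ∑ j, |(Xᵀ *ᵥ α) j| ^ q := by positivity
    have hcross : ∑ i, y i * α i ≤ 1 / (4 * γ) * ∑ i, α i ^ 2 + γ * ∑ i, y i ^ 2 := by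
      simp only [Finset.mul_sum, ← Finset.sum_add_distrib]
      refine Finset.sum_le_sum fun i _ => ?_
      have hsq : 1 / (4 * γ) * α i ^ 2 + γ * y i ^ 2 - y i * α i
          = (α i - 2 * γ * y i) ^ 2 / (4 * γ) := by
        field_simp
        ring
      linarith [hsq ▸ (by positivity : 0 ≤ (α i - 2 * γ * y i) ^ 2 / (4 * γ))]
    have hnorm : ‖α‖ ^ 2 / (4 * γ) ≤ 1 / (4 * γ) * ∑ i, α i ^ 2 := by
      rw [one_div_mul_eq_div]
      gcongr
      exact sq_norm_le_sum_sq α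
    have hhalf : 1 / (2 * γ) * ∑ i, α i ^ 2 = 2 * (1 / (4 * γ) * ∑ i, α i ^ 2) := by
      field_simp
      ring
    rw [ellpDual]
    linarith
  have hbound : Tendsto (fun t : ℝ => t ^ 2 / (4 * γ) - γ * ∑ i, y i ^ 2) atTop atTop :=
    tendsto_atTop_add_const_right _ _ <|
      (tendsto_pow_atTop two_ne_zero).atTop_div_const (by positivity)
  exact tendsto_atTop_mono hlower (hbound.comp tendsto_norm_cocompact_atTop)

lemma hasDerivAt_ellpDual_line (hq : 1 < q) (α v : m → ℝ) :
    HasDerivAt (fun t : ℝ => ellpDual X y q γ (α + t • v))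
      ((X *ᵥ (dualityMap q ∘ (Xᵀ *ᵥ α)) - y + γ⁻¹ • α) ⬝ᵥ v) 0 := by
  have hline : (fun t : ℝ => ellpDual X y q γ (α + t • v)) = fun t =>
      1 / q * ∑ j, |(Xᵀ *ᵥ α) j + t * (Xᵀ *ᵥ v) j| ^ q
        + 1 / (2 * γ) * ∑ i, (α i + t * v i) ^ 2 - ∑ i, y i * (α i + t * v i) := by
    funext t
    simp [ellpDual, mulVec_add, mulVec_smul]
  have hreg := HasDerivAt.fun_sum fun j (_ : j ∈ Finset.univ) =>
    (hasDerivAt_abs_rpow ((Xᵀ *ᵥ α) j) hq).comp_add_mul ((Xᵀ *ᵥ v) j)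
  have hsq := HasDerivAt.fun_sum fun i (_ : i ∈ Finset.univ) =>
    (hasDerivAt_pow 2 (α i)).comp_add_mul (v i)
  have hlin := HasDerivAt.fun_sum fun i (_ : i ∈ Finset.univ) =>
    ((hasDerivAt_id (α i)).const_mul (y i)).comp_add_mul (v i)
  rw [hline]
  refine (((hreg.const_mul (1 / q)).add (hsq.const_mul (1 / (2 * γ)))).sub hlin).congr_deriv ?_
  symm
  rw [add_dotProduct, sub_dotProduct, smul_dotProduct, dotProduct_comm (X *ᵥ _),
    ← dotProduct_transpose_mulVec, sub_add_eq_add_sub]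
  simp only [dotProduct, Finset.mul_sum, Function.comp_apply, dualityMap, smul_eq_mul]
  congr 1
  congr 1
  · refine Finset.sum_congr rfl fun j _ => ?_
    field_simp
  · refine Finset.sum_congr rfl fun i _ => ?_
    field_simp
    ring
  · simp

lemma ellpDual_stationary_of_forall_le (hq : 1 < q) {α : m → ℝ}
    (hα : ∀ β, ellpDual X y q γ α ≤ ellpDual X y q γ β) :
    X *ᵥ (dualityMap q ∘ (Xᵀ *ᵥ α)) - y + γ⁻¹ • α = 0 := by
  set r := X *ᵥ (dualityMap q ∘ (Xᵀ *ᵥ α)) - y + γ⁻¹ • α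
  have hmin : IsLocalMin (fun t : ℝ => ellpDual X y q γ (α + t • r)) 0 :=
    Eventually.of_forall fun t => by simpa using hα (α + t • r)
  exact dotProduct_self_eq_zero.1 (hmin.hasDerivAt_eq_zero (hasDerivAt_ellpDual_line X y hq α r))

end LeastSquares

theorem ellp_strong_duality_general (n d : ℕ) (p q γ : ℝ) (hp1 : 1 < p)
    (hpq : 1 / p + 1 / q = 1) (hγ : 0 < γ)
    (X : Matrix (Fin n) (Fin d) ℝ) (y : Fin n → ℝ)
    (F : (Fin d → ℝ) → ℝ)
    (hF : ∀ w, F w = γ / 2 * ∑ i, (X.mulVec w i - y i) ^ 2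
        + 1 / p * ∑ j, |w j| ^ p)
    (Λ : (Fin n → ℝ) → ℝ)
    (hΛ : ∀ α, Λ α = 1 / q * ∑ j, |X.transpose.mulVec α j| ^ q
        + 1 / (2 * γ) * ∑ i, α i ^ 2 - ∑ i, y i * α i) :
    (∃ wbar, ∀ w, F wbar ≤ F w) ∧ (∃ ᾱ, ∀ α, Λ ᾱ ≤ Λ α) ∧
      (⨅ w, F w) = - ⨅ α, Λ α := by
  have hconj : p.HolderConjugate q :=
    Real.holderConjugate_iff.2 ⟨hp1, by simpa only [one_div] using hpq⟩
  obtain rfl : F = ellpPrimal X y p γ := funext hF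
  obtain rfl : Λ = ellpDual X y q γ := funext hΛ
  obtain ⟨ᾱ, hᾱ⟩ := (continuous_ellpDual X y hconj.symm.nonneg).exists_forall_le
    (tendsto_ellpDual_cocompact X y hconj.symm.nonneg hγ)
  have hgap := ellpPrimal_add_ellpDual_eq_zero X y hconj hγ.ne'
    (ellpDual_stationary_of_forall_le X y hconj.symm.lt hᾱ)
  have hwbar (w : Fin d → ℝ) :
      ellpPrimal X y p γ (dualityMap q ∘ (Xᵀ *ᵥ ᾱ)) ≤ ellpPrimal X y p γ w := by
    linarith [ellpPrimal_add_ellpDual_nonneg X y hconj hγ w ᾱ]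
  refine ⟨⟨_, hwbar⟩, ⟨ᾱ, hᾱ⟩, ?_⟩
  rw [ciInf_eq_of_forall_ge_of_forall_gt_exists_lt hwbar fun _ h => ⟨_, h⟩,
    ciInf_eq_of_forall_ge_of_forall_gt_exists_lt hᾱ fun _ h => ⟨_, h⟩]
  linarith

/-- Strong duality for ℓ^p-regularized least squares, `1 < p < 2`:
the infimum of the primal objective `F` equals minus the infimum of the dual
objective `Λ`, and both infima are attained. -/
theorem ellp_strong_duality (n d : ℕ) (p q γ : ℝ) (hp1 : 1 < p) (hp2 : p < 2)
    (hpq : 1 / p + 1 / q = 1) (hγ : 0 < γ)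
    (X : Matrix (Fin n) (Fin d) ℝ) (y : Fin n → ℝ)
    (F : (Fin d → ℝ) → ℝ)
    (hF : ∀ w, F w = γ / 2 * ∑ i, (X.mulVec w i - y i) ^ 2
        + 1 / p * ∑ j, |w j| ^ p)
    (Λ : (Fin n → ℝ) → ℝ)
    (hΛ : ∀ α, Λ α = 1 / q * ∑ j, |X.transpose.mulVec α j| ^ q
        + 1 / (2 * γ) * ∑ i, α i ^ 2 - ∑ i, y i * α i) :
    (∃ wbar, ∀ w, F wbar ≤ F w) ∧ (∃ ᾱ, ∀ α, Λ ᾱ ≤ Λ α) ∧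
      (⨅ w, F w) = - ⨅ α, Λ α :=
  ellp_strong_duality_general n d p q γ hp1 hpq hγ X y F hF Λ hΛ
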